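/- Let K ⊂ ℝⁿ be a compact convex set and let [x₁, z₁] and [x₂, z₂] be exposed diameters of K that are parallel (i.e., the vectors x₁ − z₁ and x₂ − z₂ are linearly dependent and nonzero). Then [x₁, z₁] = [x₂, z₂] as segments; that is, no two distinct exposed diameters of K are parallel. -/

import Mathlib

open scoped RealInnerProductSpace

/-- The segment `[x, z]` is an *exposed diameter* of `K` provided there exist distinct
parallel hyperplanes `{y : ⟪g, y⟫ = α}` and `{y : ⟪g, y⟫ = β}` (with `g ≠ 0`, `α ≠ β`),
both supporting `K`, which meet `K` exactly in `{x}` and `{z}`, respectively. -/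
def ExposedDiameter {n : ℕ} (K : Set (EuclideanSpace ℝ (Fin n)))
    (x z : EuclideanSpace ℝ (Fin n)) : Prop :=
  ∃ (g : EuclideanSpace ℝ (Fin n)) (α β : ℝ), g ≠ 0 ∧ α ≠ β ∧
    (∀ y ∈ K, β ≤ ⟪g, y⟫ ∧ ⟪g, y⟫ ≤ α) ∧
    {y ∈ K | ⟪g, y⟫ = α} = {x} ∧ {y ∈ K | ⟪g, y⟫ = β} = {z}

/-!
If `[x, z]` is an exposed diameter with supporting hyperplanes `⟪g, ·⟫ = α, β`, then among all
differences `y - y'` of points of `K` the functional `⟪g, ·⟫` is maximized exactly at `x - z`.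
For a parallel exposed diameter with `x₁ - z₁ = c • (x₂ - z₂)`, `c > 0`, comparing with the
functionals of both diameters gives `c ≤ 1` and `1 ≤ c`, so the two differences coincide, and then
uniqueness of the maximizer identifies the endpoints. A negative `c` is reduced to a positive
one by swapping the endpoints of the second diameter.
-/

namespace ExposedDiameter

variable {n : ℕ} {K : Set (EuclideanSpace ℝ (Fin n))} {x z : EuclideanSpace ℝ (Fin n)}

theorem symm (h : ExposedDiameter K x z) : ExposedDiameter K z x := by
  obtain ⟨g, α, β, hg, hαβ, hK, hx, hz⟩ := h
  refine ⟨-g, -β, -α, neg_ne_zero.2 hg, neg_injective.ne hαβ.symm, fun y hy => ?_, ?_, ?_⟩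
  · simp only [inner_neg_left, neg_le_neg_iff]
    exact (hK y hy).symm
  · simpa only [inner_neg_left, neg_inj] using hz
  · simpa only [inner_neg_left, neg_inj] using hx

theorem left_mem (h : ExposedDiameter K x z) : x ∈ K := by
  obtain ⟨_, _, _, -, -, -, hx, -⟩ := h
  exact ((Set.ext_iff.1 hx x).2 rfl).1

theorem right_mem (h : ExposedDiameter K x z) : z ∈ K :=
  h.symm.left_mem

theorem exists_inner_sub_le (h : ExposedDiameter K x z) :
    ∃ g : EuclideanSpace ℝ (Fin n), 0 < ⟪g, x - z⟫ ∧ ∀ y ∈ K, ∀ y' ∈ K,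
      ⟪g, y - y'⟫ ≤ ⟪g, x - z⟫ ∧ (⟪g, y - y'⟫ = ⟪g, x - z⟫ → y = x ∧ y' = z) := by
  obtain ⟨g, α, β, -, hαβ, hK, hx, hz⟩ := h
  have mem_x (y) : y ∈ K ∧ ⟪g, y⟫ = α ↔ y = x := Set.ext_iff.1 hx y
  have mem_z (y) : y ∈ K ∧ ⟪g, y⟫ = β ↔ y = z := Set.ext_iff.1 hz y
  obtain ⟨hxK, hgx⟩ := (mem_x x).2 rfl
  obtain ⟨-, hgz⟩ := (mem_z z).2 rfl
  have hβα : β < α := lt_of_le_of_ne (hgx ▸ (hK x hxK).1) hαβ.symm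
  refine ⟨g, by rwa [inner_sub_right, hgx, hgz, sub_pos], fun y hy y' hy' => ?_⟩
  have hy_le := hK y hy
  have hy'_le := hK y' hy'
  simp only [inner_sub_right, hgx, hgz]
  refine ⟨by linarith, fun heq => ?_⟩
  exact ⟨(mem_x y).1 ⟨hy, by linarith⟩, (mem_z y').1 ⟨hy', by linarith⟩⟩

theorem le_of_smul_sub_eq_smul (h : ExposedDiameter K x z) {y y' : EuclideanSpace ℝ (Fin n)}
    (hy : y ∈ K) (hy' : y' ∈ K) {a b : ℝ} (hb : 0 ≤ b) (hv : a • (x - z) = b • (y - y')) :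
    a ≤ b := by
  obtain ⟨g, hpos, hmax⟩ := h.exists_inner_sub_le
  have hle : a * ⟪g, x - z⟫ ≤ b * ⟪g, x - z⟫ := calc
    a * ⟪g, x - z⟫ = b * ⟪g, y - y'⟫ := by
      rw [← real_inner_smul_right, hv, real_inner_smul_right]
    _ ≤ b * ⟪g, x - z⟫ := mul_le_mul_of_nonneg_left (hmax y hy y' hy').1 hb
  exact le_of_mul_le_mul_right hle hpos

theorem eq_of_sub_eq_smul {x' z' : EuclideanSpace ℝ (Fin n)} (h : ExposedDiameter K x z)
    (h' : ExposedDiameter K x' z') {c : ℝ} (hc : 0 < c) (hv : x - z = c • (x' - z')) :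
    x = x' ∧ z = z' := by
  have hc_ge : 1 ≤ c := h.le_of_smul_sub_eq_smul h'.left_mem h'.right_mem hc.le (by rwa [one_smul])
  have hc_le : c ≤ 1 :=
    h'.le_of_smul_sub_eq_smul h.left_mem h.right_mem zero_le_one (by rw [one_smul, hv])
  obtain rfl : c = 1 := le_antisymm hc_le hc_ge
  rw [one_smul] at hv
  obtain ⟨g', -, hmax'⟩ := h'.exists_inner_sub_le
  exact (hmax' x h.left_mem z h.right_mem).2 (by rw [hv])

end ExposedDiameter

theorem exposedDiameter_eq_of_parallel_general
    (n : ℕ) (K : Set (EuclideanSpace ℝ (Fin n)))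
    (x₁ z₁ x₂ z₂ : EuclideanSpace ℝ (Fin n))
    (h₁ : ExposedDiameter K x₁ z₁) (h₂ : ExposedDiameter K x₂ z₂)
    (hnz₁ : x₁ - z₁ ≠ 0)
    (hdep : ∃ c : ℝ, x₁ - z₁ = c • (x₂ - z₂)) :
    segment ℝ x₁ z₁ = segment ℝ x₂ z₂ := by
  obtain ⟨c, hv⟩ := hdep
  have hc : c ≠ 0 := by
    rintro rfl
    exact hnz₁ (by simpa using hv)
  rcases hc.lt_or_gt with hneg | hpos
  · obtain ⟨rfl, rfl⟩ := h₁.eq_of_sub_eq_smul h₂.symm (neg_pos.2 hneg)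
      (by rw [hv, neg_smul, ← smul_neg, neg_sub])
    exact segment_symm ℝ _ _
  · obtain ⟨rfl, rfl⟩ := h₁.eq_of_sub_eq_smul h₂ hpos hv
    rfl

/-- No two distinct exposed diameters of a compact convex set `K ⊆ ℝⁿ` are parallel:
if `[x₁, z₁]` and `[x₂, z₂]` are exposed diameters of `K` whose direction vectors are
nonzero and linearly dependent, then the two segments coincide. -/
theorem exposedDiameter_eq_of_parallel
    (n : ℕ) (K : Set (EuclideanSpace ℝ (Fin n)))
    (hc : IsCompact K) (hcv : Convex ℝ K)
    (x₁ z₁ x₂ z₂ : EuclideanSpace ℝ (Fin n))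
    (h₁ : ExposedDiameter K x₁ z₁) (h₂ : ExposedDiameter K x₂ z₂)
    (hnz₁ : x₁ - z₁ ≠ 0) (hnz₂ : x₂ - z₂ ≠ 0)
    (hdep : ∃ c : ℝ, x₁ - z₁ = c • (x₂ - z₂)) :
    segment ℝ x₁ z₁ = segment ℝ x₂ z₂ :=
  exposedDiameter_eq_of_parallel_general n K x₁ z₁ x₂ z₂ h₁ h₂ hnz₁ hdep
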